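/- A Priestley space is an Esakia space if and only if the closure of every open upset is an upset. -/

import Mathlib

/-!
Compactness and the Priestley separation axiom make the downset of a closed set closed, so the
Esakia condition only asks that `↓V` be open for clopen `V`. If it is, and `x ≤ y` with `y` outside
the closure of an upset `U`, a clopen `V ∋ y` missing `closure U` has an open downset around `x`
that cannot meet `U`. Conversely, `(↓V)ᶜ` is an open upset, and the upset property of its closure
keeps that closure away from `↓V`, because `V` is an open set inside `↓V`.
-/

open Set

section Priestley

variable {X : Type*} [TopologicalSpace X] [Preorder X] [PriestleySpace X]

theorem exists_isClopen_upper_disjoint_of_notMem_lowerClosure {s : Set X} (hs : IsCompact s)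
    {x : X} (hx : x ∉ lowerClosure s) :
    ∃ U : Set X, IsClopen U ∧ IsUpperSet U ∧ x ∈ U ∧ Disjoint U s := by
  refine hs.induction_on (p := fun t => ∃ U : Set X, IsClopen U ∧ IsUpperSet U ∧ x ∈ U ∧
    Disjoint U t) ⟨univ, isClopen_univ, isUpperSet_univ, mem_univ x, disjoint_empty _⟩
    ?_ ?_ fun v hv => ?_
  · rintro t t' htt' ⟨U, hU, hUup, hxU, hUt'⟩
    exact ⟨U, hU, hUup, hxU, hUt'.mono_right htt'⟩
  · rintro t t' ⟨U, hU, hUup, hxU, hUt⟩ ⟨U', hU', hU'up, hxU', hU't'⟩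
    exact ⟨U ∩ U', hU.inter hU', hUup.inter hU'up, ⟨hxU, hxU'⟩,
      disjoint_union_right.2 ⟨hUt.mono_left inter_subset_left, hU't'.mono_left inter_subset_right⟩⟩
  · obtain ⟨U, hU, hUup, hxU, hvU⟩ :=
      exists_isClopen_upper_of_not_le fun hxv => hx ⟨v, hv, hxv⟩
    exact ⟨Uᶜ, mem_nhdsWithin_of_mem_nhds (hU.compl.isOpen.mem_nhds hvU),
      U, hU, hUup, hxU, disjoint_compl_right⟩

theorem IsCompact.isClosed_lowerClosure {s : Set X} (hs : IsCompact s) :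
    IsClosed (lowerClosure s : Set X) := by
  refine isOpen_compl_iff.1 (isOpen_iff_forall_mem_open.2 fun x hx => ?_)
  obtain ⟨U, hU, hUup, hxU, hUs⟩ := exists_isClopen_upper_disjoint_of_notMem_lowerClosure hs hx
  exact ⟨U, fun w hwU ⟨v, hv, hwv⟩ => hUs.notMem_of_mem_left (hUup hwv hwU) hv, hU.isOpen, hxU⟩

end Priestley

section ClosureUpperSet

variable {X : Type*} [TopologicalSpace X] [Preorder X]

theorem IsUpperSet.closure_of_isOpen_lowerClosure [T2Space X] [CompactSpace X]
    [TotallyDisconnectedSpace X] (h : ∀ V : Set X, IsClopen V → IsOpen (lowerClosure V : Set X))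
    {U : Set X} (hU : IsUpperSet U) : IsUpperSet (closure U) := by
  intro x y hxy hx
  by_contra hy
  obtain ⟨V, hV, hyV, hVU⟩ := compact_exists_isClopen_in_isOpen isClosed_closure.isOpen_compl hy
  obtain ⟨u, ⟨v, hvV, huv⟩, huU⟩ :=
    mem_closure_iff.1 hx _ (h V hV) ⟨y, hyV, hxy⟩
  exact hVU hvV (subset_closure (hU huv huU))

theorem isOpen_lowerClosure_of_isUpperSet_closure {V : Set X} (hV : IsOpen V)
    (h : IsUpperSet (closure (lowerClosure V : Set X)ᶜ)) : IsOpen (lowerClosure V : Set X) := by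
  refine isClosed_compl_iff.1 (closure_subset_iff_isClosed.1 fun z hz ⟨v, hv, hzv⟩ => ?_)
  obtain ⟨w, hwV, hw⟩ := mem_closure_iff.1 (h hzv hz) V hV hv
  exact hw (subset_lowerClosure hwV)

end ClosureUpperSet

/-- A Priestley space is an Esakia space (the downset of every clopen set is clopen)
iff the closure of every open upset is an upset. -/
theorem stmt16 {X : Type*} [TopologicalSpace X] [PartialOrder X]
    [CompactSpace X] [PriestleySpace X] :
    (∀ V : Set X, IsClopen V → IsClopen {x : X | ∃ v ∈ V, x ≤ v}) ↔
      (∀ U : Set X, IsOpen U → IsUpperSet U → IsUpperSet (closure U)) := by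
  constructor
  · intro hEsakia U _ hU
    exact hU.closure_of_isOpen_lowerClosure fun V hV => (hEsakia V hV).isOpen
  · intro hClosure V hV
    have hClosed : IsClosed (lowerClosure V : Set X) := hV.isClosed.isCompact.isClosed_lowerClosure
    refine ⟨hClosed, isOpen_lowerClosure_of_isUpperSet_closure hV.isOpen ?_⟩
    exact hClosure _ hClosed.isOpen_compl (lowerClosure V).lower.compl
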